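/- arXiv:0904.0431 — 3 statements merged into one kernel-verified Lean document; each statement's English description precedes it below -/
import Mathlib

section
/- For all positive reals x, y, α, β, we have (α/x)^x · (β/y)^y ≤ ((α+β)/(x+y))^(x+y). -/
open Real

theorem stmt_0 (x y a b : ℝ) (hx : 0 < x) (hy : 0 < y) (ha : 0 < a) (hb : 0 < b) :
    (a / x) ^ x * (b / y) ^ y ≤ ((a + b) / (x + y)) ^ (x + y) := by
  have hs : 0 < x + y := by linarith
  have h := Real.geom_mean_le_arith_mean2_weighted
    (w₁ := x / (x + y)) (w₂ := y / (x + y)) (p₁ := a / x) (p₂ := b / y)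
    (by positivity) (by positivity) (by positivity) (by positivity)
    (by field_simp)
  have hsum : (x / (x + y)) * (a / x) + (y / (x + y)) * (b / y) = (a + b) / (x + y) := by
    field_simp
  rw [hsum] at h
  have h2 := Real.rpow_le_rpow (by positivity) h (le_of_lt hs)
  calc (a / x) ^ x * (b / y) ^ y
      = ((a / x) ^ (x / (x + y)) * (b / y) ^ (y / (x + y))) ^ (x + y) := by
        rw [Real.mul_rpow (by positivity) (by positivity),
          ← Real.rpow_mul (by positivity), ← Real.rpow_mul (by positivity),
          div_mul_cancel₀ _ (ne_of_gt hs), div_mul_cancel₀ _ (ne_of_gt hs)]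
    _ ≤ ((a + b) / (x + y)) ^ (x + y) := h2
end

section
/- Let G be a graph, P = x_0, x_1, ..., x_m a maximal path in G with endpoint x = x_0, and S the set of endpoints (other than x) of paths spanning V(P) obtainable from P by rotations with x fixed. Then for every vertex x_i adjacent to some vertex of S (with x_i ∉ S), at least one of x_{i−1}, x_{i+1} belongs to S (Pósa's lemma). -/
/-!
If no neighbour of `v` along the path is an endpoint, then no rotation ever breaks an edge at
`v`: a rotation with pivot `a` only removes the edge from `a` to the new endpoint and adds an edge
at the old endpoint. Hence on every rotated path the neighbours of `v` are still not endpoints.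
But if `v` is adjacent to the endpoint `s` of a rotated path `q`, then either `s` follows `v` on
`q`, or rotating `q` at `v` makes the successor of `v` an endpoint.
-/

/-- One Pósa rotation with the first endpoint fixed: if `p = x_0 … x_j x_{j+1} … x_m`
with `j < m - 1` and `{x_j, x_m} ∈ E(G)`, the rotated path is
`x_0 … x_j x_m x_{m-1} … x_{j+1}`. Here `A ++ [a] = x_0 … x_j` and
`B ++ [b] = x_{j+1} … x_m`, with `B ≠ []` ensuring `j < m - 1`. -/
def PosaRotate {V : Type*} (G : SimpleGraph V) (p q : List V) : Prop :=
  ∃ (A B : List V) (a b : V), B ≠ [] ∧ G.Adj a b ∧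
    p = (A ++ [a]) ++ (B ++ [b]) ∧ q = (A ++ [a]) ++ (B ++ [b]).reverse

namespace List

variable {α : Type*}

def Consecutive (l : List α) (u w : α) : Prop := [u, w] <:+: l ∨ [w, u] <:+: l

theorem Consecutive.symm {l : List α} {u w : α} (h : l.Consecutive u w) : l.Consecutive w u :=
  Or.symm h

theorem infix_pair_iff {u w : α} {l : List α} :
    [u, w] <:+: l ↔ ∃ (k : ℕ) (h : k + 1 < l.length), l[k] = u ∧ l[k + 1] = w := by
  rw [infix_iff_getElem?]
  constructor
  · rintro ⟨k, hk, h⟩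
    have hu := h 0 (by simp)
    have hw := h 1 (by simp)
    simp only [getElem?_eq_some_iff] at hu hw
    exact ⟨k, by simp only [length_cons, length_nil] at hk; omega, by simpa using hu.2, by simpa [Nat.add_comm] using hw.2⟩
  · rintro ⟨k, hk, rfl, rfl⟩
    refine ⟨k, by simp only [length_cons, length_nil]; omega, fun i hi => ?_⟩
    match i, hi with
    | 0, _ => simp
    | 1, _ => simp [Nat.add_comm]

theorem Nodup.consecutive_getElem {l : List α} (hl : l.Nodup) {i : ℕ} (hi : i < l.length) {w : α}
    (h : l.Consecutive l[i] w) :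
    (∃ _ : 1 ≤ i, l[i - 1]'((Nat.sub_le i 1).trans_lt hi) = w) ∨
      ∃ h : i + 1 < l.length, l[i + 1] = w := by
  rcases h with h | h <;> obtain ⟨k, hk, hu, hw⟩ := infix_pair_iff.1 h
  · obtain rfl : k = i := (hl.getElem_inj_iff).1 hu
    exact Or.inr ⟨hk, hw⟩
  · obtain rfl : k + 1 = i := (hl.getElem_inj_iff).1 hw
    exact Or.inl ⟨by omega, hu⟩

theorem pair_infix_append_iff {u w : α} {xs ys : List α} :
    [u, w] <:+: xs ++ ys ↔
      [u, w] <:+: xs ∨ [u, w] <:+: ys ∨ (xs.getLast? = some u ∧ ys.head? = some w) := by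
  rw [infix_append_iff_ne_nil]
  refine or_congr_right (or_congr_right ⟨?_, fun ⟨hu, hw⟩ => ⟨[u], [w], by simp, by simp, rfl,
    singleton_suffix_iff_getLast?_eq_some.2 hu, singleton_prefix_iff_head?_eq_some.2 hw⟩⟩)
  rintro ⟨_ | ⟨u', _ | _⟩, _ | ⟨w', _ | _⟩, h₁, h₂, h, hu, hw⟩ <;>
    simp_all [singleton_suffix_iff_getLast?_eq_some, singleton_prefix_iff_head?_eq_some]

theorem Nodup.getLast?_ne_head? {l : List α} (hl : l.Nodup) (hlen : 2 ≤ l.length) :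
    l.getLast? ≠ l.head? := by
  rw [getLast?_eq_getElem?, head?_eq_getElem?, getElem?_eq_getElem (by omega),
    getElem?_eq_getElem (by omega), Ne, Option.some_inj, hl.getElem_inj_iff]
  omega

end List

namespace PosaRotate

variable {V : Type*} {G : SimpleGraph V} {p q : List V}

theorem perm (h : PosaRotate G p q) : q.Perm p := by
  obtain ⟨A, B, a, b, -, -, rfl, rfl⟩ := h
  exact (List.reverse_perm _).append_left _

theorem head?_eq (h : PosaRotate G p q) : q.head? = p.head? := by
  obtain ⟨A, B, a, b, -, -, rfl, rfl⟩ := h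
  simp

theorem three_le_length (h : PosaRotate G p q) : 3 ≤ p.length := by
  obtain ⟨A, B, a, b, hB, -, rfl, rfl⟩ := h
  have := List.length_pos_iff.2 hB
  simp only [List.length_append, List.length_cons, List.length_nil]; omega

theorem exists_pivot (h : PosaRotate G p q) :
    ∃ a b c, [a, c] <:+: p ∧ p.getLast? = some b ∧ q.getLast? = some c ∧
      ∀ u w, q.Consecutive u w → p.Consecutive u w ∨ s(u, w) = s(a, b) := by
  obtain ⟨A, _ | ⟨c, B⟩, a, b, hB, -, rfl, rfl⟩ := h
  · exact absurd rfl hB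
  have hinfix : ∀ u w, [u, w] <:+: A ++ [a] ++ (c :: B ++ [b]).reverse →
      (A ++ [a] ++ (c :: B ++ [b])).Consecutive u w ∨ s(u, w) = s(a, b) := by
    intro u w h
    rcases List.pair_infix_append_iff.1 h with h | h | ⟨hu, hw⟩
    · exact Or.inl (Or.inl (List.infix_append_of_infix_left h))
    · rw [← List.reverse_infix] at h
      exact Or.inl (Or.inr (List.infix_append_of_infix_right (by simpa using h)))
    · simp only [List.getLast?_concat, List.head?_reverse, Option.some_inj] at hu hw
      simp [hu, hw]
  refine ⟨a, b, c, ⟨A, B ++ [b], by simp⟩, by simp [List.getLast?_append, List.getLast?_cons],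
    by simp [List.getLast?_append, List.getLast?_cons], fun u w huw => ?_⟩
  rcases huw with h | h
  · exact hinfix u w h
  · exact (hinfix w u h).imp List.Consecutive.symm Sym2.eq_swap.trans

end PosaRotate

section Endpoints

variable {V : Type*} {G : SimpleGraph V}

theorem exists_posaRotate_of_adj_getLast {q : List V} {v s : V} (hv : v ∈ q)
    (hs : q.getLast? = some s) (hvs : v ≠ s) (hadj : G.Adj v s) :
    ∃ w, [v, w] <:+: q ∧ (w = s ∨ ∃ q', PosaRotate G q q' ∧ q'.getLast? = some w) := by
  obtain ⟨C, D, rfl⟩ := List.append_of_mem hv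
  obtain _ | ⟨w, E⟩ := D
  · exact absurd (by simpa [List.getLast?_append] using hs) hvs
  refine ⟨w, ⟨C, E, by simp⟩, ?_⟩
  obtain rfl | ⟨B, b, rfl⟩ := E.eq_nil_or_concat
  · left
    simpa [List.getLast?_append] using hs
  · obtain rfl : b = s := by simpa [List.getLast?_append, List.getLast?_cons] using hs
    exact Or.inr ⟨_, ⟨C, w :: B, v, b, List.cons_ne_nil _ _, hadj, by simp, rfl⟩,
      by simp [List.getLast?_append, List.getLast?_cons]⟩

def posaEndpoints (G : SimpleGraph V) (p : List V) (x : V) : Set V :=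
  {y | ∃ q, Relation.ReflTransGen (PosaRotate G) p q ∧ q.getLast? = some y ∧ y ≠ x}

variable {p q : List V} {x : V}

theorem perm_and_head?_eq_of_reflTransGen (h : Relation.ReflTransGen (PosaRotate G) p q) :
    q.Perm p ∧ q.head? = p.head? := by
  induction h with
  | refl => exact ⟨.refl p, rfl⟩
  | tail _ h ih => exact ⟨h.perm.trans ih.1, h.head?_eq.trans ih.2⟩

theorem mem_posaEndpoints_of_getLast?_eq_some (hp : p.Nodup) (hx : p.head? = some x)
    (hq : Relation.ReflTransGen (PosaRotate G) p q) (hlen : 2 ≤ q.length) {y : V}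
    (hy : q.getLast? = some y) : y ∈ posaEndpoints G p x := by
  obtain ⟨hperm, hhead⟩ := perm_and_head?_eq_of_reflTransGen hq
  refine ⟨q, hq, hy, fun hyx => ?_⟩
  exact (hperm.nodup_iff.2 hp).getLast?_ne_head? hlen (by rw [hy, hhead, hx, hyx])

theorem consecutive_not_mem_posaEndpoints (hp : p.Nodup) (hx : p.head? = some x) {v : V}
    (hv : v ∉ posaEndpoints G p x) (hpv : ∀ w, p.Consecutive v w → w ∉ posaEndpoints G p x)
    (hq : Relation.ReflTransGen (PosaRotate G) p q) :
    ∀ w, q.Consecutive v w → w ∉ posaEndpoints G p x := by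
  induction hq with
  | refl => exact hpv
  | @tail q q' hq step ih =>
    obtain ⟨a, b, c, hac, hb, hc, hcons⟩ := step.exists_pivot
    have hlen := step.three_le_length
    have hbS := mem_posaEndpoints_of_getLast?_eq_some hp hx hq (by omega) hb
    have hcS := mem_posaEndpoints_of_getLast?_eq_some hp hx (hq.tail step)
      (by rw [step.perm.length_eq]; omega) hc
    intro w hw hwS
    rcases hcons v w hw with h | h
    · exact ih w h hwS
    · rcases Sym2.eq_iff.1 h with ⟨rfl, -⟩ | ⟨rfl, -⟩
      · exact ih c (Or.inl hac) hcS
      · exact hv hbS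

theorem exists_consecutive_mem_posaEndpoints (hp : p.Nodup) (hx : p.head? = some x) {v s : V}
    (hvp : v ∈ p) (hv : v ∉ posaEndpoints G p x) (hs : s ∈ posaEndpoints G p x)
    (hadj : G.Adj v s) : ∃ w, p.Consecutive v w ∧ w ∈ posaEndpoints G p x := by
  by_contra! hpv
  obtain ⟨q, hq, hqs, -⟩ := id hs
  have hvq : v ∈ q := (perm_and_head?_eq_of_reflTransGen hq).1.mem_iff.2 hvp
  have hvs : v ≠ s := by rintro rfl; exact hv hs
  obtain ⟨w, hvw, hw⟩ := exists_posaRotate_of_adj_getLast hvq hqs hvs hadj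
  refine consecutive_not_mem_posaEndpoints hp hx hv hpv hq w (Or.inl hvw) ?_
  rcases hw with rfl | ⟨q', step, hq'w⟩
  · exact hs
  · have := step.three_le_length
    exact mem_posaEndpoints_of_getLast?_eq_some hp hx (hq.tail step) (by rw [step.perm.length_eq]; omega) hq'w

end Endpoints

theorem stmt_6 {V : Type*} (G : SimpleGraph V)
    (p : List V) (hne : p ≠ []) (hnodup : p.Nodup)
    (x : V) (hx : p.head hne = x)
    (S : Set V)
    (hS : S = {y | ∃ q, Relation.ReflTransGen (PosaRotate G) p q ∧
      q.getLast? = some y ∧ y ≠ x}) :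
    ∀ (i : ℕ) (hi : i < p.length),
      (∃ s ∈ S, G.Adj (p.get ⟨i, hi⟩) s) → p.get ⟨i, hi⟩ ∉ S →
      ((∃ _ : 1 ≤ i, p.get ⟨i - 1, by omega⟩ ∈ S) ∨
       (∃ h : i + 1 < p.length, p.get ⟨i + 1, h⟩ ∈ S)) := by
  rintro i hi ⟨s, hs, hadj⟩ hv
  change S = posaEndpoints G p x at hS
  subst hS
  simp only [List.get_eq_getElem] at hadj hv ⊢
  obtain ⟨w, hvw, hw⟩ := exists_consecutive_mem_posaEndpoints hnodup
    (by rw [List.head?_eq_some_head hne, hx]) (List.getElem_mem hi) hv hs hadj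
  rcases hnodup.consecutive_getElem hi hvw with ⟨h, rfl⟩ | ⟨h, rfl⟩
  · exact Or.inl ⟨h, hw⟩
  · exact Or.inr ⟨h, hw⟩
end

section
/- If S ⊆ [n], |S| ≥ 2n/log n, U ⊆ [n] disjoint from S with |U| ≤ |S|, G is a graph on [n], T the vertex set of tree components of G − U − S, R the remaining vertices of G − U − S, and e(S,T) + e(S,R) > 2|S| − 2|U| + p where p is the number of tree components, and G[R] has at most 4n/log n components, then Σ_X ⌊e(X,S)/2⌋ > |S| − |U| − 2n/log n, where X ranges over components of G − U − S. -/
/-!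
Every edge between `S` and `T ∪ R = W` runs from `S` into exactly one component `X` of
`G - U - S`, so `Σ_X e(X,S) ≥ e(S,T) + e(S,R)`, and rounding `e(X,S)/2` down loses at most
`1/2` per component. A component that is not a tree meets `R`, and distinct such components
lie in distinct components of `G[R]`; hence there are at most `p + 4n/log n` components, and
the hypothesis on `e(S,T) + e(S,R)` gives the bound.
-/

open Real

/-- Number of edges of `G` with one endpoint in `A` and the other in `B`. -/
noncomputable def eBetween {V : Type*} (G : SimpleGraph V) (A B : Set V) : ℕ :=
  {e ∈ G.edgeSet | ∃ a ∈ A, ∃ b ∈ B, e = s(a, b)}.ncard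

/-- Number of edges of `G` with both endpoints in `A`. -/
noncomputable def eWithin {V : Type*} (G : SimpleGraph V) (A : Set V) : ℕ :=
  {e ∈ G.edgeSet | ∀ v ∈ e, v ∈ A}.ncard

/-- The vertex set (in `V`) of a connected component `K` of the subgraph of `G`
induced on `W`. -/
def compVerts {V : Type*} (G : SimpleGraph V) (W : Set V)
    (K : (G.induce W).ConnectedComponent) : Set V :=
  {v | ∃ h : v ∈ W, (G.induce W).connectedComponentMk ⟨v, h⟩ = K}

/-- A component is a tree component when its edge count is one less than its
vertex count. -/
def IsTreeComp {V : Type*} (G : SimpleGraph V) (W : Set V)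
    (K : (G.induce W).ConnectedComponent) : Prop :=
  eWithin G (compVerts G W K) + 1 = (compVerts G W K).ncard

section Edges

variable {V : Type*} (G : SimpleGraph V)

theorem eBetween_comm (A B : Set V) : eBetween G A B = eBetween G B A := by
  unfold eBetween
  congr 1
  ext e
  constructor <;>
  · rintro ⟨he, a, ha, b, hb, rfl⟩
    exact ⟨he, b, hb, a, ha, Sym2.eq_swap⟩

theorem eBetween_union_right [Finite V] {A B C : Set V} (hBC : Disjoint B C)
    (hAC : Disjoint A C) :
    eBetween G A (B ∪ C) = eBetween G A B + eBetween G A C := by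
  unfold eBetween
  rw [← Set.ncard_union_eq]
  · congr 1
    ext e
    simp only [Set.mem_ofPred_eq, Set.mem_union]
    constructor
    · rintro ⟨he, a, ha, b, hb | hb, rfl⟩
      exacts [Or.inl ⟨he, a, ha, b, hb, rfl⟩, Or.inr ⟨he, a, ha, b, hb, rfl⟩]
    · rintro (⟨he, a, ha, b, hb, rfl⟩ | ⟨he, a, ha, b, hb, rfl⟩)
      exacts [⟨he, a, ha, b, Or.inl hb, rfl⟩, ⟨he, a, ha, b, Or.inr hb, rfl⟩]
  · refine Set.disjoint_left.2 ?_
    rintro _ ⟨-, a, ha, b, hb, rfl⟩ ⟨-, a', ha', c, hc, he⟩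
    rcases Sym2.eq_iff.1 he with ⟨-, rfl⟩ | ⟨rfl, -⟩
    exacts [hBC.ne_of_mem hb hc rfl, hAC.ne_of_mem ha hc rfl]

theorem eBetween_iUnion_right_le {ι : Type*} [Finite ι] (A : Set V) (B : ι → Set V) :
    eBetween G A (⋃ i, B i) ≤ ∑ᶠ i, eBetween G A (B i) := by
  unfold eBetween
  convert Set.ncard_iUnion_le_of_finite (ι := ι) _ using 2
  ext e
  simp only [Set.mem_ofPred_eq, Set.mem_iUnion]
  constructor
  · rintro ⟨he, a, ha, b, ⟨i, hb⟩, rfl⟩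
    exact ⟨i, he, a, ha, b, hb, rfl⟩
  · rintro ⟨i, he, a, ha, b, hb, rfl⟩
    exact ⟨he, a, ha, b, ⟨i, hb⟩, rfl⟩

theorem iUnion_compVerts (W : Set V) : ⋃ K, compVerts G W K = W := by
  ext v
  simp only [Set.mem_iUnion, compVerts, Set.mem_ofPred_eq]
  exact ⟨fun ⟨_, h, _⟩ => h, fun h => ⟨_, h, rfl⟩⟩

theorem eBetween_le_finsum_compVerts [Finite V] (A W : Set V) :
    eBetween G A W ≤
      ∑ᶠ K : (G.induce W).ConnectedComponent, eBetween G (compVerts G W K) A := by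
  conv_lhs => rw [← iUnion_compVerts G W]
  simpa only [eBetween_comm G A] using eBetween_iUnion_right_le G A (compVerts G W)

end Edges

theorem finsum_le_two_mul_finsum_div_two_add_card {ι : Type*} [Finite ι] (f : ι → ℕ) :
    ∑ᶠ i, f i ≤ 2 * ∑ᶠ i, f i / 2 + Nat.card ι := by
  have := Fintype.ofFinite ι
  rw [finsum_eq_sum_of_fintype, finsum_eq_sum_of_fintype, Nat.card_eq_fintype_card,
    ← Finset.card_univ, Finset.mul_sum, Finset.card_eq_sum_ones, ← Finset.sum_add_distrib]
  exact Finset.sum_le_sum fun i _ => by omega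

section Components

variable {V : Type*} {G : SimpleGraph V} {W R : Set V}

theorem card_connectedComponent_le_of_forall_meet [Finite V]
    (P : (G.induce W).ConnectedComponent → Prop)
    (hRW : R ⊆ W) (hmeet : ∀ K, ¬ P K → ∃ v ∈ R, v ∈ compVerts G W K) :
    Nat.card (G.induce W).ConnectedComponent ≤
      Nat.card {K // P K} + Nat.card (G.induce R).ConnectedComponent := by
  choose f hfR hfK using fun K : {K // ¬ P K} => hmeet K.1 K.2
  let toR : {K // ¬ P K} → (G.induce R).ConnectedComponent :=
    fun K => (G.induce R).connectedComponentMk ⟨f K, hfR K⟩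
  have hleft : ∀ K, (toR K).map (G.induceHomOfLE hRW).toHom = K.1 := fun K => (hfK K).2
  have hinj : toR.Injective := fun K₁ K₂ h =>
    Subtype.ext <| by rw [← hleft K₁, ← hleft K₂, h]
  calc Nat.card (G.induce W).ConnectedComponent
      = Nat.card {K // P K} + Nat.card {K // ¬ P K} := by
        classical
        rw [← Nat.card_sum, Nat.card_congr (Equiv.sumCompl P)]
    _ ≤ _ := Nat.add_le_add_left (Nat.card_le_card_of_injective toR hinj) _

theorem card_connectedComponent_le_card_subtype_add [Finite V]
    (P : (G.induce W).ConnectedComponent → Prop) :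
    Nat.card (G.induce W).ConnectedComponent ≤ Nat.card {K // P K} +
      Nat.card (G.induce (W \ ⋃ K ∈ {K | P K}, compVerts G W K)).ConnectedComponent := by
  refine card_connectedComponent_le_of_forall_meet P Set.sdiff_subset fun K hK => ?_
  obtain ⟨v, rfl⟩ := K.exists_rep
  refine ⟨v, ⟨v.2, ?_⟩, v.2, rfl⟩
  simp only [Set.mem_iUnion]
  rintro ⟨K', hK', _, rfl⟩
  exact hK hK'

end Components

theorem stmt_15_general (n : ℕ) (G : SimpleGraph (Fin n)) (S U : Set (Fin n))
    -- the vertex set of `G - U - S`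
    (W : Set (Fin n)) (hW : W = (S ∪ U)ᶜ)
    -- `T` is the vertex set of the tree components, `R` the rest
    (T : Set (Fin n))
    (hT : T = ⋃ K ∈ {K : (G.induce W).ConnectedComponent | IsTreeComp G W K},
      compVerts G W K)
    (R : Set (Fin n)) (hR : R = W \ T)
    -- `p` is the number of tree components
    (p : ℕ) (hp : p = Nat.card {K : (G.induce W).ConnectedComponent // IsTreeComp G W K})
    (hmany : (2 : ℝ) * S.ncard - 2 * U.ncard + p < eBetween G S T + eBetween G S R)
    (hRcomp : (Nat.card ((G.induce R).ConnectedComponent) : ℝ) ≤ 4 * n / Real.log n) :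
    (S.ncard : ℝ) - U.ncard - 2 * n / Real.log n <
      ∑ᶠ K : (G.induce W).ConnectedComponent, (eBetween G (compVerts G W K) S / 2 : ℕ) := by
  have hTW : T ⊆ W := hT ▸ Set.iUnion₂_subset fun K _ v hv => hv.1
  have hSR : Disjoint S R := by
    rw [hR, hW]
    exact Set.disjoint_left.2 fun v hvS hvR => hvR.1 (Or.inl hvS)
  have hedges : eBetween G S T + eBetween G S R ≤
      ∑ᶠ K : (G.induce W).ConnectedComponent, eBetween G (compVerts G W K) S := by
    rw [← eBetween_union_right G (hR ▸ Set.disjoint_sdiff_right) hSR, hR,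
      Set.union_sdiff_cancel hTW]
    exact eBetween_le_finsum_compVerts G S W
  have hfloor := finsum_le_two_mul_finsum_div_two_add_card
    fun K : (G.induce W).ConnectedComponent => eBetween G (compVerts G W K) S
  have hcomps := card_connectedComponent_le_card_subtype_add (IsTreeComp G W)
  rw [← hT, ← hR, ← hp] at hcomps
  have hcount : (eBetween G S T : ℝ) + eBetween G S R ≤
      2 * ↑(∑ᶠ K : (G.induce W).ConnectedComponent, eBetween G (compVerts G W K) S / 2) + p +
        Nat.card (G.induce R).ConnectedComponent := by
    exact_mod_cast hedges.trans (hfloor.trans (by omega))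
  have hhalf : (4 : ℝ) * n / log n = 2 * (2 * n / log n) := by ring
  linarith

theorem stmt_15 (n : ℕ) (G : SimpleGraph (Fin n)) (S U : Set (Fin n))
    (hSU : Disjoint S U)
    (hSsize : 2 * n / Real.log n ≤ S.ncard)
    (hUS : U.ncard ≤ S.ncard)
    -- the vertex set of `G - U - S`
    (W : Set (Fin n)) (hW : W = (S ∪ U)ᶜ)
    -- `T` is the vertex set of the tree components, `R` the rest
    (T : Set (Fin n))
    (hT : T = ⋃ K ∈ {K : (G.induce W).ConnectedComponent | IsTreeComp G W K},
      compVerts G W K)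
    (R : Set (Fin n)) (hR : R = W \ T)
    -- `p` is the number of tree components
    (p : ℕ) (hp : p = Nat.card {K : (G.induce W).ConnectedComponent // IsTreeComp G W K})
    (hmany : (2 : ℝ) * S.ncard - 2 * U.ncard + p < eBetween G S T + eBetween G S R)
    (hRcomp : (Nat.card ((G.induce R).ConnectedComponent) : ℝ) ≤ 4 * n / Real.log n) :
    (S.ncard : ℝ) - U.ncard - 2 * n / Real.log n <
      ∑ᶠ K : (G.induce W).ConnectedComponent, (eBetween G (compVerts G W K) S / 2 : ℕ) :=
  stmt_15_general n G S U W hW T hT R hR p hp hmany hRcomp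
end
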